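/- For every real number γ, 1 < G(γ) < 2. -/

import Mathlib

open Real MeasureTheory

/-- Standard normal density `φ(x) = (2π)^(−1/2) exp(−x²/2)`. -/
noncomputable def stdPDF (x : ℝ) : ℝ := (Real.sqrt (2 * Real.pi))⁻¹ * Real.exp (-x ^ 2 / 2)

/-- Standard normal cumulative distribution function `Φ(x) = ∫_{−∞}^x φ(u) du`. -/
noncomputable def stdCDF (x : ℝ) : ℝ := ∫ u in Set.Iic x, stdPDF u

/-- Mills hazard `h(γ) = φ(γ)/(1 − Φ(γ))`. -/
noncomputable def millsHazard (γ : ℝ) : ℝ := stdPDF γ / (1 - stdCDF γ)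

/-- `G(γ) = (1/(h(γ) − γ))·(1/(h(γ) − γ) − γ)` where `h` is the Mills hazard. -/
noncomputable def G (γ : ℝ) : ℝ :=
  (1 / (millsHazard γ - γ)) * (1 / (millsHazard γ - γ) - γ)

/-!
Write `e = h(γ) - γ`. Then `G(γ) = (1 - γ e) / e²`, so `1 < G(γ) < 2` says that
`e² + γ e < 1 < 2 e² + γ e`, i.e. that `e > 0` lies strictly between the positive roots
`(√(γ² + 8) - γ) / 4` of `2 e² + γ e - 1` and `(√(γ² + 4) - γ) / 2` of `e² + γ e - 1`. These are
Sampford's and Birnbaum's bounds `(3γ + √(γ² + 8)) / 4 < h(γ) < (γ + √(γ² + 4)) / 2`.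

Both come from comparison with the Riccati equation `h' = h (h - x)` solved by the hazard: for a
positive `v` tending to `+∞`, the function `1 - Φ - φ / v` has derivative `φ (v' - v (v - x)) / v²`
and tends to `0` at `+∞`, so `v' < v (v - x)` forces `1 - Φ > φ / v`, i.e. `h < v`, and
`v' > v (v - x)` forces `h > v`.
-/

open Filter Set Topology

lemma stdPDF_eq_gaussianPDFReal : stdPDF = ProbabilityTheory.gaussianPDFReal 0 1 := by
  funext x
  simp [stdPDF, ProbabilityTheory.gaussianPDFReal]

lemma stdPDF_pos (x : ℝ) : 0 < stdPDF x := by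
  unfold stdPDF
  positivity

lemma integrable_stdPDF : Integrable stdPDF := by
  rw [stdPDF_eq_gaussianPDFReal]
  exact ProbabilityTheory.integrable_gaussianPDFReal 0 1

lemma integral_stdPDF : ∫ x, stdPDF x = 1 := by
  rw [stdPDF_eq_gaussianPDFReal]
  exact ProbabilityTheory.integral_gaussianPDFReal_eq_one 0 one_ne_zero

lemma hasDerivAt_stdPDF (x : ℝ) : HasDerivAt stdPDF (-x * stdPDF x) x := by
  have h : HasDerivAt (fun y : ℝ => -y ^ 2 / 2) (-x) x :=
    ((hasDerivAt_pow 2 x).neg.div_const 2).congr_deriv (by ring)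
  refine (h.exp.const_mul (Real.sqrt (2 * Real.pi))⁻¹).congr_deriv ?_
  simp only [stdPDF]
  ring

lemma tendsto_stdPDF_atTop : Tendsto stdPDF atTop (𝓝 0) := by
  have h : Tendsto (fun x : ℝ => -x ^ 2 / 2) atTop atBot :=
    (tendsto_neg_atTop_atBot.comp (tendsto_pow_atTop two_ne_zero)).atBot_div_const two_pos
  have h' := (Real.tendsto_exp_atBot.comp h).const_mul (Real.sqrt (2 * Real.pi))⁻¹
  rw [mul_zero] at h'
  exact h'

lemma hasDerivAt_stdCDF (x : ℝ) : HasDerivAt stdCDF (stdPDF x) x := by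
  have hcont : Continuous stdPDF := by unfold stdPDF; fun_prop
  have hshift : (fun y => stdCDF 0 + ∫ u in (0 : ℝ)..y, stdPDF u) = stdCDF := by
    funext y
    rw [← intervalIntegral.integral_Iic_sub_Iic integrable_stdPDF.integrableOn
      integrable_stdPDF.integrableOn]
    unfold stdCDF
    ring
  exact hshift ▸ ((hcont.integral_hasStrictDerivAt 0 x).hasDerivAt.const_add _)

lemma one_sub_stdCDF_eq_integral_Ioi (x : ℝ) : 1 - stdCDF x = ∫ u in Ioi x, stdPDF u := by
  rw [← integral_stdPDF, ← intervalIntegral.integral_Iic_add_Ioi integrable_stdPDF.integrableOn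
    integrable_stdPDF.integrableOn, stdCDF, add_sub_cancel_left]

lemma one_sub_stdCDF_pos (x : ℝ) : 0 < 1 - stdCDF x := by
  rw [one_sub_stdCDF_eq_integral_Ioi, setIntegral_pos_iff_support_of_nonneg_ae
    (ae_of_all _ fun u => (stdPDF_pos u).le) integrable_stdPDF.integrableOn,
    Function.support_eq_univ fun u => (stdPDF_pos u).ne', univ_inter, Real.volume_Ioi]
  simp

lemma tendsto_one_sub_stdCDF_atTop : Tendsto (fun x => 1 - stdCDF x) atTop (𝓝 0) := by
  simp_rw [one_sub_stdCDF_eq_integral_Ioi]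
  exact tendsto_integral_Ioi_zero tendsto_id

lemma millsHazard_pos (x : ℝ) : 0 < millsHazard x :=
  div_pos (stdPDF_pos x) (one_sub_stdCDF_pos x)

theorem StrictAntiOn.lt_of_tendsto_atTop {α β : Type*} [LinearOrder α] [NoMaxOrder α]
    [LinearOrder β] [TopologicalSpace β] [OrderClosedTopology β] {f : α → β} {a x : α} {L : β}
    (hf : StrictAntiOn f (Ioi a)) (hL : Tendsto f atTop (𝓝 L)) (hx : a < x) : L < f x := by
  have : Nonempty α := ⟨x⟩
  obtain ⟨y, hxy⟩ := exists_gt x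
  have hLy : L ≤ f y := le_of_tendsto hL <| (eventually_ge_atTop y).mono fun z hz =>
    hf.antitoneOn (hx.trans hxy) (hx.trans (hxy.trans_le hz)) hz
  exact hLy.trans_lt (hf hx (hx.trans hxy) hxy)

theorem StrictMonoOn.lt_of_tendsto_atTop {α β : Type*} [LinearOrder α] [NoMaxOrder α]
    [LinearOrder β] [TopologicalSpace β] [OrderClosedTopology β] {f : α → β} {a x : α} {L : β}
    (hf : StrictMonoOn f (Ioi a)) (hL : Tendsto f atTop (𝓝 L)) (hx : a < x) : f x < L :=
  StrictAntiOn.lt_of_tendsto_atTop (β := βᵒᵈ) hf.dual_right hL hx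

section Comparison

variable {v v' : ℝ → ℝ} {a : ℝ}

lemma hasDerivAt_one_sub_stdCDF_sub_stdPDF_div {x : ℝ} (hv : HasDerivAt v (v' x) x)
    (hvx : v x ≠ 0) :
    HasDerivAt (fun y => 1 - stdCDF y - stdPDF y / v y)
      (stdPDF x * (v' x - v x * (v x - x)) / v x ^ 2) x := by
  refine (((hasDerivAt_stdCDF x).const_sub 1).sub
    ((hasDerivAt_stdPDF x).div hv hvx)).congr_deriv ?_
  field_simp
  ring

lemma tendsto_one_sub_stdCDF_sub_stdPDF_div (hv : Tendsto v atTop atTop) :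
    Tendsto (fun y => 1 - stdCDF y - stdPDF y / v y) atTop (𝓝 0) := by
  simpa using tendsto_one_sub_stdCDF_atTop.sub (tendsto_stdPDF_atTop.div_atTop hv)

lemma millsHazard_lt_of_hasDerivAt (hv : ∀ x, a < x → HasDerivAt v (v' x) x)
    (hv_pos : ∀ x, a < x → 0 < v x) (hv_top : Tendsto v atTop atTop)
    (hsub : ∀ x, a < x → v' x < v x * (v x - x)) {x : ℝ} (hx : a < x) :
    millsHazard x < v x := by
  have hd y (hy : a < y) :=
    hasDerivAt_one_sub_stdCDF_sub_stdPDF_div (hv y hy) (hv_pos y hy).ne'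
  have hanti : StrictAntiOn (fun y => 1 - stdCDF y - stdPDF y / v y) (Ioi a) := by
    refine strictAntiOn_of_deriv_neg (convex_Ioi a)
      (fun y hy => (hd y hy).continuousAt.continuousWithinAt) fun y hy => ?_
    rw [interior_Ioi] at hy
    rw [(hd y hy).deriv]
    have := hv_pos y hy
    exact div_neg_of_neg_of_pos (mul_neg_of_pos_of_neg (stdPDF_pos y) (sub_neg.2 (hsub y hy)))
      (by positivity)
  have := hanti.lt_of_tendsto_atTop (tendsto_one_sub_stdCDF_sub_stdPDF_div hv_top) hx
  rw [millsHazard, div_lt_iff₀ (one_sub_stdCDF_pos x)]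
  rw [sub_pos, div_lt_iff₀ (hv_pos x hx)] at this
  linarith

lemma lt_millsHazard_of_hasDerivAt (hv : ∀ x, a < x → HasDerivAt v (v' x) x)
    (hv_pos : ∀ x, a < x → 0 < v x) (hv_top : Tendsto v atTop atTop)
    (hsuper : ∀ x, a < x → v x * (v x - x) < v' x) {x : ℝ} (hx : a < x) :
    v x < millsHazard x := by
  have hd y (hy : a < y) :=
    hasDerivAt_one_sub_stdCDF_sub_stdPDF_div (hv y hy) (hv_pos y hy).ne'
  have hmono : StrictMonoOn (fun y => 1 - stdCDF y - stdPDF y / v y) (Ioi a) := by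
    refine strictMonoOn_of_deriv_pos (convex_Ioi a)
      (fun y hy => (hd y hy).continuousAt.continuousWithinAt) fun y hy => ?_
    rw [interior_Ioi] at hy
    rw [(hd y hy).deriv]
    have := hv_pos y hy
    exact div_pos (mul_pos (stdPDF_pos y) (sub_pos.2 (hsuper y hy))) (by positivity)
  have := hmono.lt_of_tendsto_atTop (tendsto_one_sub_stdCDF_sub_stdPDF_div hv_top) hx
  rw [millsHazard, lt_div_iff₀ (one_sub_stdCDF_pos x)]
  rw [sub_neg, lt_div_iff₀ (hv_pos x hx)] at this
  linarith

end Comparison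

lemma abs_lt_sqrt_sq_add {k : ℝ} (hk : 0 < k) (x : ℝ) : |x| < √(x ^ 2 + k) :=
  Real.lt_sqrt_of_sq_lt (by rw [sq_abs]; linarith)

lemma hasDerivAt_sqrt_sq_add {k : ℝ} (hk : 0 < k) (x : ℝ) :
    HasDerivAt (fun y => √(y ^ 2 + k)) (x / √(x ^ 2 + k)) x := by
  have hpos : 0 < √(x ^ 2 + k) := (abs_nonneg x).trans_lt (abs_lt_sqrt_sq_add hk x)
  refine (((hasDerivAt_pow 2 x).add_const k).sqrt (by positivity)).congr_deriv ?_
  field_simp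
  ring

theorem millsHazard_lt_birnbaum (x : ℝ) : millsHazard x < (x + √(x ^ 2 + 4)) / 2 := by
  have hs (y : ℝ) := abs_lt_sqrt_sq_add four_pos y
  have hs2 (y : ℝ) : √(y ^ 2 + 4) ^ 2 = y ^ 2 + 4 := Real.sq_sqrt (by positivity)
  refine millsHazard_lt_of_hasDerivAt (a := x - 1) (v := fun y => (y + √(y ^ 2 + 4)) / 2)
    (v' := fun y => (1 + y / √(y ^ 2 + 4)) / 2)
    (fun y _ => ((hasDerivAt_id' y).add (hasDerivAt_sqrt_sq_add four_pos y)).div_const 2)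
    (fun y _ => ?_) ?_ (fun y _ => ?_) (sub_one_lt x)
  · linarith [neg_abs_le y, hs y]
  · exact tendsto_atTop_mono (fun y => show y ≤ _ by linarith [le_abs_self y, hs y]) tendsto_id
  · have hvv : (y + √(y ^ 2 + 4)) / 2 * ((y + √(y ^ 2 + 4)) / 2 - y) = 1 := by
      linear_combination hs2 y / 4
    have hlt : y / √(y ^ 2 + 4) < 1 :=
      (div_lt_one ((abs_nonneg y).trans_lt (hs y))).2 ((le_abs_self y).trans_lt (hs y))
    linarith

-- For `v = (3x + √(x² + 8)) / 4`, the condition `v (v - x) < v'` is equivalent to this.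
lemma cube_add_six_mul_lt (y : ℝ) : y ^ 3 + 6 * y < √(y ^ 2 + 8) * (y ^ 2 + 2) := by
  have ht := abs_lt_sqrt_sq_add (by norm_num : (0 : ℝ) < 8) y
  have ht2 : √(y ^ 2 + 8) ^ 2 = y ^ 2 + 8 := Real.sq_sqrt (by positivity)
  nlinarith [abs_mul_abs_self y, abs_nonneg y, le_abs_self y, neg_abs_le y]

theorem sampford_lt_millsHazard (x : ℝ) : (3 * x + √(x ^ 2 + 8)) / 4 < millsHazard x := by
  have ht (y : ℝ) := abs_lt_sqrt_sq_add (by norm_num : (0 : ℝ) < 8) y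
  have ht2 (y : ℝ) : √(y ^ 2 + 8) ^ 2 = y ^ 2 + 8 := Real.sq_sqrt (by positivity)
  rcases le_or_gt x (-1) with hx | hx
  · have : √(x ^ 2 + 8) ≤ -3 * x := Real.sqrt_le_iff.2 ⟨by linarith, by nlinarith⟩
    linarith [millsHazard_pos x]
  refine lt_millsHazard_of_hasDerivAt (a := -1) (v := fun y => (3 * y + √(y ^ 2 + 8)) / 4)
    (v' := fun y => (3 + y / √(y ^ 2 + 8)) / 4)
    (fun y _ => (((hasDerivAt_id' y).const_mul 3).add
      (hasDerivAt_sqrt_sq_add (by norm_num) y)).div_const 4 |>.congr_deriv (by ring))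
    (fun y hy => ?_) ?_ (fun y _ => ?_) hx
  · nlinarith [ht y, ht2 y, neg_abs_le y]
  · exact tendsto_atTop_mono (fun y => show y ≤ _ by linarith [le_abs_self y, ht y]) tendsto_id
  · have htpos : 0 < √(y ^ 2 + 8) := (abs_nonneg y).trans_lt (ht y)
    have := cube_add_six_mul_lt y
    rw [← sub_pos]
    field_simp
    nlinarith [ht2 y]

/-- For every real number `γ`, `1 < G(γ) < 2`. -/
theorem one_lt_G_lt_two (γ : ℝ) : 1 < G γ ∧ G γ < 2 := by
  have hs := abs_lt_sqrt_sq_add four_pos γ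
  have hs2 : √(γ ^ 2 + 4) ^ 2 = γ ^ 2 + 4 := Real.sq_sqrt (by positivity)
  have ht := abs_lt_sqrt_sq_add (by norm_num : (0 : ℝ) < 8) γ
  have ht2 : √(γ ^ 2 + 8) ^ 2 = γ ^ 2 + 8 := Real.sq_sqrt (by positivity)
  set e := millsHazard γ - γ with he
  have he_lt : e < (√(γ ^ 2 + 4) - γ) / 2 := by linarith [millsHazard_lt_birnbaum γ]
  have lt_he : (√(γ ^ 2 + 8) - γ) / 4 < e := by linarith [sampford_lt_millsHazard γ]
  have he_pos : 0 < e := by linarith [le_abs_self γ]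
  have hG : G γ = (1 - γ * e) / e ^ 2 := by
    rw [G, ← he]
    field_simp
  rw [hG, lt_div_iff₀ (by positivity), div_lt_iff₀ (by positivity)]
  have hlo : 0 < (√(γ ^ 2 + 4) - (2 * e + γ)) * (√(γ ^ 2 + 4) + (2 * e + γ)) :=
    mul_pos (by linarith) (by linarith [neg_abs_le γ])
  have hhi : 0 < (4 * e + γ - √(γ ^ 2 + 8)) * (4 * e + γ + √(γ ^ 2 + 8)) :=
    mul_pos (by linarith) (by linarith [neg_abs_le γ])
  constructor <;> nlinarith
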